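/- arXiv:2510.22714 — 2 statements merged into one kernel-verified Lean document; each statement's English description precedes it below -/
import Mathlib

section
/- Let X be a nonconstant real random variable with finite third moment, mean μ and variance σ² > 0, and let X_1, X_2, X_3 be three i.i.d. copies of X. Then the skewness coefficient Sk(X) := E[(X - μ)^3]/σ³ satisfies Sk(X) = E[(X_1 - X_3)(X_1 - X_2)^2]/σ³ = √8 · E[(X_1 - X_3)(X_1 - X_2)^2] / (E[(X_1 - X_2)^2])^{3/2} = (√2/3) · E[D_1 D_2 D_3] / (E[(X_1 - X_2)^2])^{3/2}, where D_i := ∑_{j ≠ i}(X_i - X_j). -/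
open MeasureTheory ProbabilityTheory Finset

/-!
Write `Zᵢ = Xᵢ - μ`: these are independent and centred, so `E[Zᵢ Zⱼ Zₖ]` vanishes unless
`i = j = k`, since an index occurring exactly once splits off as an independent centred factor.
Hence for linear forms `E[⟨a, Z⟩ ⟨b, Z⟩ ⟨c, Z⟩] = E[(X - μ)³] ∑ aᵢ bᵢ cᵢ`, and likewise
`E[⟨a, Z⟩ ⟨b, Z⟩] = σ² ∑ aᵢ bᵢ`. The quantities `X₁ - X₃`, `X₁ - X₂` and `Dᵢ` are linear forms in
the `Xᵢ` with coefficient sum zero, so they are the same forms in the `Zᵢ`, and the coefficient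
sums `∑ aᵢ bᵢ cᵢ` come out as `1` and `6`, while `E[(X₁ - X₂)²] = 2σ²`.
-/

lemma Real.sqrt_eight : √8 = 2 * √2 := by
  rw [show (8 : ℝ) = 2 ^ 2 * 2 by norm_num, Real.sqrt_mul (by positivity),
    Real.sqrt_sq zero_le_two]

lemma Real.two_mul_rpow_three_div_two {x : ℝ} (hx : 0 ≤ x) :
    (2 * x) ^ ((3 : ℝ) / 2) = √8 * √x ^ 3 := by
  rw [Real.rpow_div_two_eq_sqrt _ (by positivity), Real.sqrt_mul zero_le_two, Real.sqrt_eight]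
  norm_cast
  linear_combination (√2 * √x ^ 3) * Real.sq_sqrt zero_le_two

lemma Finset.sum_mul_sub_const_of_sum_eq_zero {ι R : Type*} [CommRing R] {s : Finset ι}
    {a : ι → R} (ha : ∑ i ∈ s, a i = 0) (y : ι → R) (m : R) :
    ∑ i ∈ s, a i * (y i - m) = ∑ i ∈ s, a i * y i := by
  simp [mul_sub, sum_sub_distrib, ← sum_mul, ha]

lemma MeasureTheory.MemLp.integrable_mul_mul {α 𝕜 : Type*} {mα : MeasurableSpace α}
    {μ : Measure α} [NormedRing 𝕜] {f g h : α → 𝕜}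
    (hf : MemLp f 3 μ) (hg : MemLp g 3 μ) (hh : MemLp h 3 μ) :
    Integrable (fun ω => f ω * g ω * h ω) μ := by
  have : ENNReal.HolderTriple (3⁻¹ + 3⁻¹)⁻¹ 3 1 :=
    ⟨by rw [inv_inv, inv_one, ENNReal.inv_three_add_inv_three]⟩
  exact (hg.mul' hf (hpqr := .of 3 3)).integrable_mul hh

namespace ProbabilityTheory

variable {Ω ι : Type*} {mΩ : MeasurableSpace Ω} {μ : Measure Ω} {Z : ι → Ω → ℝ}

lemma iIndepFun.integral_mul_eq_ite [DecidableEq ι] (hZ : iIndepFun Z μ)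
    (hmeas : ∀ i, AEMeasurable (Z i) μ)
    (hcent : ∀ i, ∫ ω, Z i ω ∂μ = 0) (i j : ι) :
    ∫ ω, Z i ω * Z j ω ∂μ = if i = j then ∫ ω, Z i ω ^ 2 ∂μ else 0 := by
  split_ifs with hij
  · simp [hij, sq]
  · have h := (hZ.indepFun hij).integral_mul_eq_mul_integral
      (hmeas i).aestronglyMeasurable (hmeas j).aestronglyMeasurable
    simpa [hcent j] using h

lemma iIndepFun.integral_mul_mul_eq_zero (hZ : iIndepFun Z μ)
    (hmeas : ∀ i, AEMeasurable (Z i) μ)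
    (hcent : ∀ i, ∫ ω, Z i ω ∂μ = 0) {i j k : ι} (hik : i ≠ k) (hjk : j ≠ k) :
    ∫ ω, Z i ω * Z j ω * Z k ω ∂μ = 0 := by
  have h := (hZ.indepFun_mul_left₀ hmeas i j k hik hjk).integral_mul_eq_mul_integral
    ((hmeas i).mul (hmeas j)).aestronglyMeasurable (hmeas k).aestronglyMeasurable
  simpa [hcent k] using h

lemma iIndepFun.integral_mul_mul_eq_ite [DecidableEq ι] (hZ : iIndepFun Z μ)
    (hmeas : ∀ i, AEMeasurable (Z i) μ)
    (hcent : ∀ i, ∫ ω, Z i ω ∂μ = 0) (i j k : ι) :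
    ∫ ω, Z i ω * Z j ω * Z k ω ∂μ = if i = j ∧ j = k then ∫ ω, Z i ω ^ 3 ∂μ else 0 := by
  split_ifs with h
  · obtain ⟨rfl, rfl⟩ := h
    simp [pow_three, mul_assoc]
  by_cases hki : k = i
  · subst hki
    have hkj : k ≠ j := fun hkj => h ⟨hkj, hkj.symm⟩
    simp_rw [mul_right_comm (Z k _) (Z j _)]
    exact hZ.integral_mul_mul_eq_zero hmeas hcent hkj hkj
  by_cases hkj : k = j
  · subst hkj
    simp_rw [mul_comm (Z i _) (Z k _), mul_right_comm (Z k _) (Z i _)]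
    exact hZ.integral_mul_mul_eq_zero hmeas hcent hki hki
  · exact hZ.integral_mul_mul_eq_zero hmeas hcent (Ne.symm hki) (Ne.symm hkj)

lemma IdentDistrib.integral_sub_integral_eq_zero [IsProbabilityMeasure μ] {X Y : Ω → ℝ}
    (hid : IdentDistrib Y X μ μ) (hX : Integrable X μ) : ∫ ω, Y ω - ∫ ω, X ω ∂μ ∂μ = 0 := by
  rw [integral_sub (hid.integrable_iff.2 hX) (integrable_const _), hid.integral_eq]
  simp

variable [Fintype ι]

lemma iIndepFun.integral_sum_mul_sum (hZ : iIndepFun Z μ) (h2 : ∀ i, MemLp (Z i) 2 μ)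
    (hcent : ∀ i, ∫ ω, Z i ω ∂μ = 0) (a b : ι → ℝ) :
    ∫ ω, (∑ i, a i * Z i ω) * (∑ i, b i * Z i ω) ∂μ = ∑ i, a i * b i * ∫ ω, Z i ω ^ 2 ∂μ := by
  classical
  have hmeas i : AEMeasurable (Z i) μ := (h2 i).aestronglyMeasurable.aemeasurable
  have hint i j : Integrable (fun ω => a i * b j * (Z i ω * Z j ω)) μ :=
    ((h2 i).integrable_mul (h2 j)).const_mul _
  have hexpand ω : (∑ i, a i * Z i ω) * (∑ i, b i * Z i ω)
      = ∑ i, ∑ j, a i * b j * (Z i ω * Z j ω) := by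
    rw [sum_mul_sum]
    exact sum_congr rfl fun i _ => sum_congr rfl fun j _ => by ring
  simp_rw [hexpand]
  rw [integral_finsetSum _ fun i _ => integrable_finsetSum _ fun j _ => hint i j]
  simp_rw [integral_finsetSum _ fun j _ => hint _ j, integral_const_mul,
    hZ.integral_mul_eq_ite hmeas hcent]
  simp

lemma iIndepFun.integral_sum_mul_sum_mul_sum (hZ : iIndepFun Z μ) (h3 : ∀ i, MemLp (Z i) 3 μ)
    (hcent : ∀ i, ∫ ω, Z i ω ∂μ = 0) (a b c : ι → ℝ) :
    ∫ ω, (∑ i, a i * Z i ω) * (∑ i, b i * Z i ω) * (∑ i, c i * Z i ω) ∂μ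
      = ∑ i, a i * b i * c i * ∫ ω, Z i ω ^ 3 ∂μ := by
  classical
  have hmeas i : AEMeasurable (Z i) μ := (h3 i).aestronglyMeasurable.aemeasurable
  have hint i j k : Integrable (fun ω => a i * b j * c k * (Z i ω * Z j ω * Z k ω)) μ :=
    ((h3 i).integrable_mul_mul (h3 j) (h3 k)).const_mul _
  have hexpand ω : (∑ i, a i * Z i ω) * (∑ i, b i * Z i ω) * (∑ i, c i * Z i ω)
      = ∑ i, ∑ j, ∑ k, a i * b j * c k * (Z i ω * Z j ω * Z k ω) := by
    rw [sum_mul_sum, sum_mul]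
    simp_rw [sum_mul, mul_sum]
    exact sum_congr rfl fun i _ => sum_congr rfl fun j _ => sum_congr rfl fun k _ => by ring
  simp_rw [hexpand]
  rw [integral_finsetSum _ fun i _ => integrable_finsetSum _ fun j _ =>
    integrable_finsetSum _ fun k _ => hint i j k]
  simp_rw [integral_finsetSum _ fun j _ => integrable_finsetSum _ fun k _ => hint _ j k,
    integral_finsetSum _ fun k _ => hint _ _ k, integral_const_mul,
    hZ.integral_mul_mul_eq_ite hmeas hcent]
  simp [ite_and]

section IdentDistrib

variable {X : Ω → ℝ} {Y : ι → Ω → ℝ} [IsProbabilityMeasure μ]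

lemma iIndepFun.integral_sum_mul_sum_of_identDistrib (hY : iIndepFun Y μ)
    (hid : ∀ i, IdentDistrib (Y i) X μ μ) (hX : MemLp X 2 μ) (a b : ι → ℝ)
    (ha : ∑ i, a i = 0) (hb : ∑ i, b i = 0) :
    ∫ ω, (∑ i, a i * Y i ω) * (∑ i, b i * Y i ω) ∂μ = (∑ i, a i * b i) * variance X μ := by
  set m := ∫ ω, X ω ∂μ
  have hZ : iIndepFun (fun i ω => Y i ω - m) μ :=
    hY.comp (fun _ x => x - m) fun _ => by fun_prop
  have hZ2 i : MemLp (fun ω => Y i ω - m) 2 μ := ((hid i).memLp_iff.2 hX).sub (memLp_const m)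
  have hcent i : ∫ ω, Y i ω - m ∂μ = 0 :=
    (hid i).integral_sub_integral_eq_zero (hX.integrable one_le_two)
  have hmom i : ∫ ω, (Y i ω - m) ^ 2 ∂μ = variance X μ := by
    rw [variance_eq_integral hX.aestronglyMeasurable.aemeasurable]
    exact ((hid i).comp (by fun_prop : Measurable fun x => (x - m) ^ 2)).integral_eq
  have hcenter ω : (∑ i, a i * Y i ω) * (∑ i, b i * Y i ω)
      = (∑ i, a i * (Y i ω - m)) * (∑ i, b i * (Y i ω - m)) := by
    rw [sum_mul_sub_const_of_sum_eq_zero ha, sum_mul_sub_const_of_sum_eq_zero hb]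
  simp_rw [hcenter, hZ.integral_sum_mul_sum hZ2 hcent, hmom, sum_mul]

lemma iIndepFun.integral_sum_mul_sum_mul_sum_of_identDistrib (hY : iIndepFun Y μ)
    (hid : ∀ i, IdentDistrib (Y i) X μ μ) (hX : MemLp X 3 μ) (a b c : ι → ℝ)
    (ha : ∑ i, a i = 0) (hb : ∑ i, b i = 0) (hc : ∑ i, c i = 0) :
    ∫ ω, (∑ i, a i * Y i ω) * (∑ i, b i * Y i ω) * (∑ i, c i * Y i ω) ∂μ
      = (∑ i, a i * b i * c i) * centralMoment X 3 μ := by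
  set m := ∫ ω, X ω ∂μ
  have hZ : iIndepFun (fun i ω => Y i ω - m) μ :=
    hY.comp (fun _ x => x - m) fun _ => by fun_prop
  have hZ3 i : MemLp (fun ω => Y i ω - m) 3 μ := ((hid i).memLp_iff.2 hX).sub (memLp_const m)
  have hcent i : ∫ ω, Y i ω - m ∂μ = 0 :=
    (hid i).integral_sub_integral_eq_zero (hX.integrable (by norm_num))
  have hmom i : ∫ ω, (Y i ω - m) ^ 3 ∂μ = centralMoment X 3 μ :=
    ((hid i).comp (by fun_prop : Measurable fun x => (x - m) ^ 3)).integral_eq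
  have hcenter ω : (∑ i, a i * Y i ω) * (∑ i, b i * Y i ω) * (∑ i, c i * Y i ω)
      = (∑ i, a i * (Y i ω - m)) * (∑ i, b i * (Y i ω - m)) * (∑ i, c i * (Y i ω - m)) := by
    rw [sum_mul_sub_const_of_sum_eq_zero ha, sum_mul_sub_const_of_sum_eq_zero hb,
      sum_mul_sub_const_of_sum_eq_zero hc]
  simp_rw [hcenter, hZ.integral_sum_mul_sum_mul_sum hZ3 hcent, hmom, sum_mul]

end IdentDistrib

section ThreeCopies

variable {X : Ω → ℝ} {Y : Fin 3 → Ω → ℝ} [IsProbabilityMeasure μ]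

lemma iIndepFun.integral_sub_sq_of_identDistrib (hY : iIndepFun Y μ)
    (hid : ∀ i, IdentDistrib (Y i) X μ μ) (hX : MemLp X 2 μ) :
    ∫ ω, (Y 0 ω - Y 1 ω) ^ 2 ∂μ = 2 * variance X μ := by
  convert hY.integral_sum_mul_sum_of_identDistrib hid hX ![1, -1, 0] ![1, -1, 0]
    (by simp [Fin.sum_univ_three]) (by simp [Fin.sum_univ_three]) using 1
  · congr 1 with ω
    simp [Fin.sum_univ_three]
    ring
  · simp [Fin.sum_univ_three]
    norm_num

lemma iIndepFun.integral_sub_mul_sub_sq_of_identDistrib (hY : iIndepFun Y μ)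
    (hid : ∀ i, IdentDistrib (Y i) X μ μ) (hX : MemLp X 3 μ) :
    ∫ ω, (Y 0 ω - Y 2 ω) * (Y 0 ω - Y 1 ω) ^ 2 ∂μ = centralMoment X 3 μ := by
  convert hY.integral_sum_mul_sum_mul_sum_of_identDistrib hid hX
    ![1, 0, -1] ![1, -1, 0] ![1, -1, 0]
    (by simp [Fin.sum_univ_three]) (by simp [Fin.sum_univ_three])
    (by simp [Fin.sum_univ_three]) using 1
  · congr 1 with ω
    simp [Fin.sum_univ_three]
    ring
  · simp [Fin.sum_univ_three]

lemma iIndepFun.integral_prod_sum_erase_sub_of_identDistrib (hY : iIndepFun Y μ)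
    (hid : ∀ i, IdentDistrib (Y i) X μ μ) (hX : MemLp X 3 μ) :
    ∫ ω, ∏ i, ∑ j ∈ univ.erase i, (Y i ω - Y j ω) ∂μ = 6 * centralMoment X 3 μ := by
  convert hY.integral_sum_mul_sum_mul_sum_of_identDistrib hid hX
    ![2, -1, -1] ![-1, 2, -1] ![-1, -1, 2]
    (by simp [Fin.sum_univ_three]; norm_num) (by simp [Fin.sum_univ_three]; norm_num)
    (by simp [Fin.sum_univ_three]; norm_num) using 1
  · congr 1 with ω
    simp [sum_erase_eq_sub (mem_univ _), Fin.sum_univ_three, Fin.prod_univ_three]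
    ring
  · simp [Fin.sum_univ_three]
    norm_num

end ThreeCopies

end ProbabilityTheory

theorem skewness_D_representations_general
    {Ω : Type*} {mΩ : MeasurableSpace Ω} {μ : Measure Ω} [IsProbabilityMeasure μ]
    (X : Ω → ℝ) (Y : Fin 3 → Ω → ℝ) (μX σ : ℝ) (D : Fin 3 → Ω → ℝ)
    (hX : MemLp X 3 μ)
    (hμX : μX = ∫ a, X a ∂μ) (hσ : σ = Real.sqrt (variance X μ))
    (hindep : iIndepFun Y μ)
    (hid : ∀ i, IdentDistrib (Y i) X μ μ)
    (hD : ∀ i ω, D i ω = ∑ j ∈ Finset.univ.erase i, (Y i ω - Y j ω)) :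
    ((∫ ω, (X ω - μX) ^ 3 ∂μ) / σ ^ 3
        = (∫ ω, (Y 0 ω - Y 2 ω) * (Y 0 ω - Y 1 ω) ^ 2 ∂μ) / σ ^ 3)
    ∧ ((∫ ω, (X ω - μX) ^ 3 ∂μ) / σ ^ 3
        = Real.sqrt 8 * (∫ ω, (Y 0 ω - Y 2 ω) * (Y 0 ω - Y 1 ω) ^ 2 ∂μ)
            / (∫ ω, (Y 0 ω - Y 1 ω) ^ 2 ∂μ) ^ ((3 : ℝ) / 2))
    ∧ ((∫ ω, (X ω - μX) ^ 3 ∂μ) / σ ^ 3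
        = (Real.sqrt 2 / 3) * (∫ ω, D 0 ω * D 1 ω * D 2 ω ∂μ)
            / (∫ ω, (Y 0 ω - Y 1 ω) ^ 2 ∂μ) ^ ((3 : ℝ) / 2)) := by
  have hκ : ∫ ω, (X ω - μX) ^ 3 ∂μ = centralMoment X 3 μ := by rw [hμX]; rfl
  have hA := hindep.integral_sub_mul_sub_sq_of_identDistrib hid hX
  have hC : ∫ ω, D 0 ω * D 1 ω * D 2 ω ∂μ = 6 * centralMoment X 3 μ := by
    simpa only [Fin.prod_univ_three, ← hD] using
      hindep.integral_prod_sum_erase_sub_of_identDistrib hid hX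
  have hdenom : (∫ ω, (Y 0 ω - Y 1 ω) ^ 2 ∂μ) ^ ((3 : ℝ) / 2) = √8 * σ ^ 3 := by
    rw [hindep.integral_sub_sq_of_identDistrib hid (hX.mono_exponent (by norm_num)),
      Real.two_mul_rpow_three_div_two (variance_nonneg X μ), hσ]
  have h8 : √2 / 3 * (6 * centralMoment X 3 μ) = √8 * centralMoment X 3 μ := by
    rw [Real.sqrt_eight]
    ring
  refine ⟨by rw [hκ, hA], ?_, ?_⟩
  · rw [hκ, hA, hdenom, mul_div_mul_left _ _ (by positivity)]
  · rw [hκ, hC, hdenom, h8, mul_div_mul_left _ _ (by positivity)]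

theorem skewness_D_representations
    {Ω : Type*} {mΩ : MeasurableSpace Ω} {μ : Measure Ω} [IsProbabilityMeasure μ]
    (X : Ω → ℝ) (Y : Fin 3 → Ω → ℝ) (μX σ : ℝ) (D : Fin 3 → Ω → ℝ)
    (hX : MemLp X 3 μ)
    (hμX : μX = ∫ a, X a ∂μ) (hσ : σ = Real.sqrt (variance X μ))
    (hσpos : 0 < variance X μ)
    (hindep : iIndepFun Y μ)
    (hid : ∀ i, IdentDistrib (Y i) X μ μ)
    (hD : ∀ i ω, D i ω = ∑ j ∈ Finset.univ.erase i, (Y i ω - Y j ω)) :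
    ((∫ ω, (X ω - μX) ^ 3 ∂μ) / σ ^ 3
        = (∫ ω, (Y 0 ω - Y 2 ω) * (Y 0 ω - Y 1 ω) ^ 2 ∂μ) / σ ^ 3)
    ∧ ((∫ ω, (X ω - μX) ^ 3 ∂μ) / σ ^ 3
        = Real.sqrt 8 * (∫ ω, (Y 0 ω - Y 2 ω) * (Y 0 ω - Y 1 ω) ^ 2 ∂μ)
            / (∫ ω, (Y 0 ω - Y 1 ω) ^ 2 ∂μ) ^ ((3 : ℝ) / 2))
    ∧ ((∫ ω, (X ω - μX) ^ 3 ∂μ) / σ ^ 3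
        = (Real.sqrt 2 / 3) * (∫ ω, D 0 ω * D 1 ω * D 2 ω ∂μ)
            / (∫ ω, (Y 0 ω - Y 1 ω) ^ 2 ∂μ) ^ ((3 : ℝ) / 2)) :=
  skewness_D_representations_general (mΩ := mΩ) X Y μX σ D hX hμX hσ hindep hid hD
end

section
/- Define recursively the functions μ̄_1 := 0, μ̄_2(x_1, x_2) := (1/2)(x_1 - x_2)^2, μ̄_3(x_1, x_2, x_3) := (x_1 - x_3)(x_1 - x_2)^2, μ̄_4(x_1, x_2, x_3, x_4) := (1/2)(x_1 - x_2)^4 - (3/4)(x_1 - x_2)^2 (x_3 - x_4)^2, and for k ≥ 4, μ̄_{k+1}(x_1, ..., x_{k+1}) := (x_1 - x_3)(x_1 - x_2)^k - ∑_{j=2}^{k-1} (-1)^j binom(k, j) μ̄_j(x_1, ..., x_j) μ̄_{k+1-j}(x_{j+1}, ..., x_{k+1}). Let X be a real random variable with mean μ = E[X] and finite moments up to order n+1 (n ≥ 1), and let X_1, ..., X_{n+1} be i.i.d. copies of X. Then for every k with 1 ≤ k ≤ n, E[μ̄_{k+1}(X_1, ..., X_{k+1})] = E[(X - μ)^{k+1}].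 -/
open MeasureTheory ProbabilityTheory Finset Fin.NatCast

/-- The recursively defined functions `μ̄_k`, acting on sequences of reals
(only the first `k` entries are used by `mbar k`). -/
noncomputable def mbar : ℕ → (ℕ → ℝ) → ℝ
  | 0, _ => 0
  | 1, _ => 0
  | 2, x => (1 / 2) * (x 0 - x 1) ^ 2
  | 3, x => (x 0 - x 2) * (x 0 - x 1) ^ 2
  | 4, x => (1 / 2) * (x 0 - x 1) ^ 4 - (3 / 4) * (x 0 - x 1) ^ 2 * (x 2 - x 3) ^ 2
  | (k + 5), x =>
      (x 0 - x 2) * (x 0 - x 1) ^ (k + 4)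
        - ∑ j ∈ (Finset.Icc 2 (k + 3)).attach,
            (-1 : ℝ) ^ (j : ℕ) * ((k + 4).choose (j : ℕ) : ℝ)
              * mbar (j : ℕ) x * mbar (k + 5 - (j : ℕ)) (fun i => x (i + (j : ℕ)))
  termination_by k => k
  decreasing_by
  · have := j.2; simp only [Finset.mem_Icc] at this; omega
  · have := j.2; simp only [Finset.mem_Icc] at this; omega

/-!
Since `mbar` only sees differences of its arguments, the `Y i` may be centred at `μX`; so let `X`
have mean zero and moments `m p`, with `m 0 = 1` and `m 1 = 0`. By the binomial theorem and
independence, `E[(x₀ - x₂)(x₀ - x₁)^k] = ∑_{j ≤ k} (-1)^j C(k,j) m (k+1-j) m j`. In the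
recursion the two factors of `mbar j x * mbar (k+1-j) (x ∘ (· + j))` read disjoint blocks of the
variables, so by independence and induction the product has expectation `m j * m (k+1-j)`. These
cancel every term of the binomial sum except `j = 0, 1, k`, which leave `m (k+1)`. The initial
values `k + 1 ≤ 4` are checked directly from the same two expansions.
-/

theorem mbar_succ_of_four_le {m : ℕ} (hm : 4 ≤ m) (x : ℕ → ℝ) :
    mbar (m + 1) x = (x 0 - x 2) * (x 0 - x 1) ^ m
      - ∑ j ∈ Icc 2 (m - 1),
          (-1 : ℝ) ^ j * (m.choose j : ℝ) * (mbar j x * mbar (m + 1 - j) fun i => x (i + j)) := by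
  obtain ⟨k, rfl⟩ := Nat.exists_eq_add_of_le' hm
  rw [mbar, ← sum_attach (Icc 2 (k + 4 - 1))]
  simp only [mul_assoc]
  rfl

theorem dependsOn_mbar (k : ℕ) : DependsOn (mbar k) (Set.Iio k) := by
  intro x y hxy
  induction k, x using mbar.induct generalizing y with
  | case1 | case2 => simp only [mbar]
  | case3 | case4 | case5 =>
    simp only [Set.mem_Iio] at hxy
    simp (disch := omega) only [mbar, hxy]
  | case6 k x ih₁ ih₂ =>
    simp only [Set.mem_Iio] at hxy
    rw [mbar, mbar]
    congr 1
    · simp (disch := omega) only [hxy]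
    · refine sum_congr rfl fun j _ => ?_
      have := mem_Icc.1 j.2
      rw [ih₁ j (y := y) fun i hi => hxy i (by simp at hi; omega),
        ih₂ j (y := fun i => y (i + j)) fun i hi => hxy _ (by simp at hi; omega)]

theorem mbar_sub_const (k : ℕ) (x : ℕ → ℝ) (c : ℝ) : mbar k (fun i => x i - c) = mbar k x := by
  induction k, x using mbar.induct with
  | case1 | case2 => simp only [mbar]
  | case3 | case4 | case5 => simp only [mbar]; ring
  | case6 k x ih₁ ih₂ =>
    rw [mbar, mbar]
    congr 1
    · ring
    · exact sum_congr rfl fun j _ => by rw [ih₁ j, ih₂ j]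

theorem measurable_mbar (k : ℕ) : Measurable (mbar k) := by
  induction k using Nat.strong_induction_on with
  | _ k ih =>
    match k with
    | 0 => rw [funext mbar.eq_1]; fun_prop
    | 1 => rw [funext mbar.eq_2]; fun_prop
    | 2 => rw [funext mbar.eq_3]; fun_prop
    | 3 => rw [funext mbar.eq_4]; fun_prop
    | 4 => rw [funext mbar.eq_5]; fun_prop
    | m + 5 =>
      rw [funext (mbar_succ_of_four_le (m := m + 4) (by omega))]
      refine .sub (by fun_prop) (Finset.measurable_sum _ fun j hj => ?_)
      have := mem_Icc.1 hj
      exact measurable_const.mul ((ih j (by omega)).mul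
        ((ih _ (by omega)).comp (measurable_pi_lambda _ fun i => measurable_pi_apply _)))

theorem Set.InjOn.comp_add_right {α : Type*} {e : ℕ → α} {j l : ℕ}
    (he : Set.InjOn e (Set.Iio (j + l))) : Set.InjOn (fun i => e (i + j)) (Set.Iio l) :=
  fun a ha b hb hab => by
    simp only [Set.mem_Iio] at ha hb
    have := he (show a + j < j + l by omega) (show b + j < j + l by omega) hab
    omega

section Independence

variable {Ω ι β γ δ : Type*} {mΩ : MeasurableSpace Ω} {μ : Measure Ω} [MeasurableSpace β]
  [Nonempty β] [MeasurableSpace γ] [MeasurableSpace δ] {Z : ι → Ω → β}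

theorem ProbabilityTheory.iIndepFun.indepFun_comp_of_dependsOn (hZ : iIndepFun Z μ)
    (hZm : ∀ i, AEMeasurable (Z i) μ) {S T : Finset ι} (hST : Disjoint S T)
    {F : (ι → β) → γ} {G : (ι → β) → δ} (hF : Measurable F) (hG : Measurable G)
    (hFS : DependsOn F S) (hGT : DependsOn G T) :
    IndepFun (fun ω => F fun i => Z i ω) (fun ω => G fun i => Z i ω) μ := by
  classical
  -- `F` and `G` factor measurably through the `S`- and `T`-coordinates: fill in the others by `x₀`.
  let x₀ : ι → β := fun _ => Classical.arbitrary β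
  have key := (hZ.indepFun_finset₀ S T hST hZm).comp
    (hF.comp (measurable_updateFinset (x := x₀))) (hG.comp (measurable_updateFinset (x := x₀)))
  convert key using 1 <;> funext ω
  · exact hFS fun i hi => by simp [Function.updateFinset, Finset.mem_coe.1 hi]
  · exact hGT fun i hi => by simp [Function.updateFinset, Finset.mem_coe.1 hi]

theorem ProbabilityTheory.iIndepFun.indepFun_comp_shift (hZ : iIndepFun Z μ)
    (hZm : ∀ i, AEMeasurable (Z i) μ) {e : ℕ → ι} {j l : ℕ} (he : Set.InjOn e (Set.Iio (j + l)))
    {F : (ℕ → β) → γ} {G : (ℕ → β) → δ} (hF : Measurable F) (hG : Measurable G)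
    (hFj : DependsOn F (Set.Iio j)) (hGl : DependsOn G (Set.Iio l)) :
    IndepFun (fun ω => F fun i => Z (e i) ω) (fun ω => G fun i => Z (e (i + j)) ω) μ := by
  classical
  refine hZ.indepFun_comp_of_dependsOn hZm (S := (range j).image e)
    (T := (Ico j (j + l)).image e) ?_ (F := fun y => F fun i => y (e i))
    (G := fun y => G fun i => y (e (i + j))) (by fun_prop) (by fun_prop) ?_ ?_
  · refine disjoint_left.2 ?_
    simp only [mem_image, mem_range, mem_Ico, not_exists, not_and]
    rintro _ ⟨a, ha, rfl⟩ b ⟨hb₁, hb₂⟩ hab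
    have := he (show b < j + l by omega) (show a < j + l by omega) hab
    omega
  · exact fun x y hxy => hFj fun i hi => hxy _ (mem_image_of_mem e (by simpa using hi))
  · exact fun x y hxy => hGl fun i hi => hxy _ (mem_image_of_mem e (by simp at hi ⊢; omega))

end Independence

theorem pow_mul_sub_pow_eq_sum {R : Type*} [CommRing R] (a b : R) (r m : ℕ) :
    a ^ r * (a - b) ^ m
      = ∑ j ∈ range (m + 1), (-1) ^ j * (m.choose j : R) * (a ^ (m + r - j) * b ^ j) := by
  rw [sub_eq_neg_add, add_pow, mul_sum]
  refine sum_congr rfl fun j hj => ?_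
  rw [neg_pow, show m + r - j = m - j + r by have := mem_range.1 hj; omega, pow_add]
  ring

section Moments

variable {Ω : Type*} {mΩ : MeasurableSpace Ω} {μ : Measure Ω} {A B : Ω → ℝ} {N p q : ℕ}

theorem ProbabilityTheory.IdentDistrib.moment_eq {Ω' : Type*} {mΩ' : MeasurableSpace Ω'}
    {ν : Measure Ω'} {B : Ω' → ℝ} (h : IdentDistrib A B μ ν) (p : ℕ) :
    moment A p μ = moment B p ν :=
  (h.comp (measurable_id.pow_const p)).integral_eq

theorem ProbabilityTheory.moment_zero_right [IsProbabilityMeasure μ] (A : Ω → ℝ) :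
    moment A 0 μ = 1 := by
  simp [moment]

theorem MeasureTheory.MemLp.integrable_pow_of_le [IsFiniteMeasure μ] (hA : MemLp A N μ)
    (hp : p ≤ N) : Integrable (fun ω => A ω ^ p) μ := by
  have hAp : AEStronglyMeasurable (fun ω => A ω ^ p) μ :=
    (hA.aestronglyMeasurable.aemeasurable.pow_const p).aestronglyMeasurable
  refine (integrable_norm_iff hAp).1 ?_
  simpa only [norm_pow] using (hA.mono_exponent (by exact_mod_cast hp)).integrable_norm_pow'

theorem ProbabilityTheory.IndepFun.integrable_pow_mul_pow [IsFiniteMeasure μ]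
    (hAB : IndepFun A B μ) (hA : MemLp A N μ) (hB : MemLp B N μ) (hp : p ≤ N) (hq : q ≤ N) :
    Integrable (fun ω => A ω ^ p * B ω ^ q) μ :=
  (hAB.comp (measurable_id.pow_const p) (measurable_id.pow_const q)).integrable_mul
    (hA.integrable_pow_of_le hp) (hB.integrable_pow_of_le hq)

theorem ProbabilityTheory.IndepFun.integral_pow_mul_pow (hAB : IndepFun A B μ)
    (hA : AEMeasurable A μ) (hB : AEMeasurable B μ) :
    ∫ ω, A ω ^ p * B ω ^ q ∂μ = moment A p μ * moment B q μ :=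
  (hAB.comp (measurable_id.pow_const p) (measurable_id.pow_const q))
    |>.integral_fun_mul_eq_mul_integral (hA.pow_const p).aestronglyMeasurable
      (hB.pow_const q).aestronglyMeasurable

theorem ProbabilityTheory.IndepFun.integrable_pow_mul_sub_pow [IsFiniteMeasure μ]
    (hAB : IndepFun A B μ) (hA : MemLp A N μ) (hB : MemLp B N μ) {r m : ℕ} (hrm : r + m ≤ N) :
    Integrable (fun ω => A ω ^ r * (A ω - B ω) ^ m) μ := by
  simp_rw [pow_mul_sub_pow_eq_sum]
  exact integrable_finsetSum _ fun j hj => (hAB.integrable_pow_mul_pow hA hB (by omega)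
    (by have := mem_range.1 hj; omega)).const_mul _

theorem ProbabilityTheory.IndepFun.integral_pow_mul_sub_pow [IsFiniteMeasure μ]
    (hAB : IndepFun A B μ) (hA : MemLp A N μ) (hB : MemLp B N μ) {r m : ℕ} (hrm : r + m ≤ N) :
    ∫ ω, A ω ^ r * (A ω - B ω) ^ m ∂μ = ∑ j ∈ range (m + 1),
      (-1) ^ j * (m.choose j : ℝ) * (moment A (m + r - j) μ * moment B j μ) := by
  simp_rw [pow_mul_sub_pow_eq_sum]
  rw [integral_finsetSum _ fun j hj => (hAB.integrable_pow_mul_pow hA hB (by omega)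
    (by have := mem_range.1 hj; omega)).const_mul _]
  simp_rw [integral_const_mul, hAB.integral_pow_mul_pow hA.aemeasurable hB.aemeasurable]

end Moments

theorem sum_range_sub_sum_Icc_eq {M : ℕ → ℝ} (h₀ : M 0 = 1) (h₁ : M 1 = 0) {m : ℕ}
    (hm : 2 ≤ m) :
    ∑ j ∈ range (m + 1), (-1) ^ j * (m.choose j : ℝ) * (M (m + 1 - j) * M j)
      - ∑ j ∈ Icc 2 (m - 1), (-1) ^ j * (m.choose j : ℝ) * (M (m + 1 - j) * M j)
      = M (m + 1) := by
  rw [sum_range_succ, range_eq_Ico, sum_eq_sum_Ico_succ_bot (by omega),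
    sum_eq_sum_Ico_succ_bot (by omega),
    show Ico (0 + 1 + 1) m = Icc 2 (m - 1) by ext; simp; omega]
  simp [h₀, h₁]

theorem integrable_and_integral_mbar_mul_mbar_shift {Ω ι : Type*} {mΩ : MeasurableSpace Ω}
    {μ : Measure Ω} {Z : ι → Ω → ℝ} (hZ : iIndepFun Z μ) (hZm : ∀ i, AEMeasurable (Z i) μ)
    {e : ℕ → ι} {j l : ℕ} (he : Set.InjOn e (Set.Iio (j + l))) {a b : ℝ}
    (hj : Integrable (fun ω => mbar j fun i => Z (e i) ω) μ ∧
      ∫ ω, mbar j (fun i => Z (e i) ω) ∂μ = a)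
    (hl : Integrable (fun ω => mbar l fun i => Z (e (i + j)) ω) μ ∧
      ∫ ω, mbar l (fun i => Z (e (i + j)) ω) ∂μ = b) :
    Integrable (fun ω => (mbar j fun i => Z (e i) ω) * mbar l fun i => Z (e (i + j)) ω) μ ∧
      ∫ ω, (mbar j fun i => Z (e i) ω) * (mbar l fun i => Z (e (i + j)) ω) ∂μ = a * b := by
  have hind := hZ.indepFun_comp_shift hZm he (measurable_mbar j) (measurable_mbar l)
    (dependsOn_mbar j) (dependsOn_mbar l)
  refine ⟨hind.integrable_mul hj.1 hl.1, ?_⟩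
  rw [hind.integral_fun_mul_eq_mul_integral hj.1.1 hl.1.1, hj.2, hl.2]

section IID

variable {Ω ι : Type*} {mΩ : MeasurableSpace Ω} {μ : Measure Ω} [IsProbabilityMeasure μ]
  {Z : ι → Ω → ℝ} {X : Ω → ℝ} {N : ℕ}

theorem integrable_and_integral_sub_pow (hZ : iIndepFun Z μ)
    (hZX : ∀ i, IdentDistrib (Z i) X μ μ) (hX : MemLp X N μ) {a b : ι} (hab : a ≠ b) {m : ℕ}
    (hm : m ≤ N) :
    Integrable (fun ω => (Z a ω - Z b ω) ^ m) μ ∧ ∫ ω, (Z a ω - Z b ω) ^ m ∂μ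
      = ∑ j ∈ range (m + 1), (-1) ^ j * (m.choose j : ℝ) * (moment X (m - j) μ * moment X j μ) := by
  have hZN i : MemLp (Z i) N μ := (hZX i).symm.memLp_snd hX
  have h := hZ.indepFun hab
  refine ⟨by simpa using h.integrable_pow_mul_sub_pow (hZN a) (hZN b) (r := 0) (by omega), ?_⟩
  simpa [(hZX a).moment_eq, (hZX b).moment_eq] using
    h.integral_pow_mul_sub_pow (hZN a) (hZN b) (r := 0) (by omega)

theorem integrable_and_integral_sub_mul_sub_pow (hZ : iIndepFun Z μ)
    (hZX : ∀ i, IdentDistrib (Z i) X μ μ) (hX : MemLp X N μ) (hX₀ : μ[X] = 0) {a b c : ι}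
    (hab : a ≠ b) (hac : a ≠ c) (hbc : b ≠ c) {m : ℕ} (hm : m + 1 ≤ N) :
    Integrable (fun ω => (Z a ω - Z c ω) * (Z a ω - Z b ω) ^ m) μ ∧
      ∫ ω, (Z a ω - Z c ω) * (Z a ω - Z b ω) ^ m ∂μ = ∑ j ∈ range (m + 1),
        (-1) ^ j * (m.choose j : ℝ) * (moment X (m + 1 - j) μ * moment X j μ) := by
  have hZm i : AEMeasurable (Z i) μ := (hZX i).aemeasurable_fst
  have hZN i : MemLp (Z i) N μ := (hZX i).symm.memLp_snd hX
  have hab' := hZ.indepFun hab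
  have hc : IndepFun (Z c) (fun ω => (Z a ω - Z b ω) ^ m) μ :=
    ((hZ.indepFun_prodMk₀ hZm a b c hac hbc).comp
      (show Measurable fun x : ℝ × ℝ => (x.1 - x.2) ^ m by fun_prop) measurable_id).symm
  have hA := hab'.integrable_pow_mul_sub_pow (hZN a) (hZN b) (r := 1) (m := m) (by omega)
  have hC : Integrable (fun ω => Z c ω * (Z a ω - Z b ω) ^ m) μ :=
    hc.integrable_mul ((hZN c).integrable (by norm_cast; omega))
      (integrable_and_integral_sub_pow hZ hZX hX hab (by omega)).1
  have hsplit : (fun ω => (Z a ω - Z c ω) * (Z a ω - Z b ω) ^ m)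
      = fun ω => Z a ω ^ 1 * (Z a ω - Z b ω) ^ m - Z c ω * (Z a ω - Z b ω) ^ m := by
    funext ω; ring
  rw [hsplit]
  refine ⟨hA.sub hC, ?_⟩
  rw [integral_sub hA hC, hab'.integral_pow_mul_sub_pow (hZN a) (hZN b) (by omega),
    hc.integral_fun_mul_eq_mul_integral (hZm c).aestronglyMeasurable (by fun_prop),
    (hZX c).integral_eq, hX₀]
  simp [(hZX a).moment_eq, (hZX b).moment_eq]

theorem integrable_and_integral_mbar_two (hZ : iIndepFun Z μ)
    (hZX : ∀ i, IdentDistrib (Z i) X μ μ) (hX : MemLp X N μ) (hX₀ : μ[X] = 0) (hN : 2 ≤ N)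
    {e : ℕ → ι} (he : Set.InjOn e (Set.Iio 2)) :
    Integrable (fun ω => mbar 2 fun i => Z (e i) ω) μ ∧
      ∫ ω, mbar 2 (fun i => Z (e i) ω) ∂μ = moment X 2 μ := by
  obtain ⟨hi, hint⟩ :=
    integrable_and_integral_sub_pow hZ hZX hX (he.ne (by simp) (by simp) zero_ne_one) hN
  simp only [mbar]
  refine ⟨hi.const_mul _, ?_⟩
  rw [integral_const_mul, hint]
  simp [sum_range_succ, moment_one, hX₀, moment_zero_right]
  ring

theorem integrable_and_integral_mbar_three (hZ : iIndepFun Z μ)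
    (hZX : ∀ i, IdentDistrib (Z i) X μ μ) (hX : MemLp X N μ) (hX₀ : μ[X] = 0) (hN : 3 ≤ N)
    {e : ℕ → ι} (he : Set.InjOn e (Set.Iio 3)) :
    Integrable (fun ω => mbar 3 fun i => Z (e i) ω) μ ∧
      ∫ ω, mbar 3 (fun i => Z (e i) ω) ∂μ = moment X 3 μ := by
  obtain ⟨hi, hint⟩ := integrable_and_integral_sub_mul_sub_pow hZ hZX hX hX₀
    (he.ne (by simp) (by simp) (by decide : 0 ≠ 1)) (he.ne (by simp) (by simp) (by decide : 0 ≠ 2))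
    (he.ne (by simp) (by simp) (by decide : 1 ≠ 2)) (m := 2) hN
  simp only [mbar]
  refine ⟨hi, ?_⟩
  rw [hint]
  simp [sum_range_succ, moment_one, hX₀, moment_zero_right]

theorem integrable_and_integral_mbar_four (hZ : iIndepFun Z μ)
    (hZX : ∀ i, IdentDistrib (Z i) X μ μ) (hX : MemLp X N μ) (hX₀ : μ[X] = 0) (hN : 4 ≤ N)
    {e : ℕ → ι} (he : Set.InjOn e (Set.Iio 4)) :
    Integrable (fun ω => mbar 4 fun i => Z (e i) ω) μ ∧
      ∫ ω, mbar 4 (fun i => Z (e i) ω) ∂μ = moment X 4 μ := by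
  have hZm i : AEMeasurable (Z i) μ := (hZX i).aemeasurable_fst
  obtain ⟨hi, hint⟩ :=
    integrable_and_integral_sub_pow hZ hZX hX (he.ne (by simp) (by simp) zero_ne_one) hN
  obtain ⟨hpi, hp⟩ := integrable_and_integral_mbar_mul_mbar_shift hZ hZm (j := 2) (l := 2) he
    (integrable_and_integral_mbar_two hZ hZX hX hX₀ (by omega) (he.mono (by simp)))
    (integrable_and_integral_mbar_two hZ hZX hX hX₀ (by omega) he.comp_add_right)
  have hsplit : (fun ω => mbar 4 fun i => Z (e i) ω) = fun ω =>
      1 / 2 * (Z (e 0) ω - Z (e 1) ω) ^ 4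
        - 3 * ((mbar 2 fun i => Z (e i) ω) * mbar 2 fun i => Z (e (i + 2)) ω) := by
    funext ω; simp only [mbar]; ring
  rw [hsplit]
  refine ⟨(hi.const_mul _).sub (hpi.const_mul _), ?_⟩
  rw [integral_sub (hi.const_mul _) (hpi.const_mul _), integral_const_mul, integral_const_mul,
    hint, hp]
  simp [sum_range_succ, moment_one, hX₀, moment_zero_right, Nat.choose]
  ring

theorem integrable_and_integral_mbar_succ_of_four_le (hZ : iIndepFun Z μ)
    (hZX : ∀ i, IdentDistrib (Z i) X μ μ) (hX : MemLp X N μ) (hX₀ : μ[X] = 0) {m : ℕ}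
    (hm : 4 ≤ m) (hmN : m + 1 ≤ N)
    (ih : ∀ K < m + 1, 1 ≤ K → ∀ e : ℕ → ι, Set.InjOn e (Set.Iio K) →
      Integrable (fun ω => mbar K fun i => Z (e i) ω) μ ∧
        ∫ ω, mbar K (fun i => Z (e i) ω) ∂μ = moment X K μ)
    {e : ℕ → ι} (he : Set.InjOn e (Set.Iio (m + 1))) :
    Integrable (fun ω => mbar (m + 1) fun i => Z (e i) ω) μ ∧
      ∫ ω, mbar (m + 1) (fun i => Z (e i) ω) ∂μ = moment X (m + 1) μ := by
  have hZm i : AEMeasurable (Z i) μ := (hZX i).aemeasurable_fst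
  have hblock : ∀ j ∈ Icc 2 (m - 1),
      Integrable (fun ω =>
        (mbar j fun i => Z (e i) ω) * mbar (m + 1 - j) fun i => Z (e (i + j)) ω) μ ∧
      ∫ ω, (mbar j fun i => Z (e i) ω) * (mbar (m + 1 - j) fun i => Z (e (i + j)) ω) ∂μ
        = moment X (m + 1 - j) μ * moment X j μ := by
    intro j hj
    have hj := mem_Icc.1 hj
    have he' : Set.InjOn e (Set.Iio (j + (m + 1 - j))) := by
      rwa [Nat.add_sub_cancel' (by omega)]
    rw [mul_comm]
    exact integrable_and_integral_mbar_mul_mbar_shift hZ hZm he'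
      (ih j (by omega) (by omega) e (he.mono (Set.Iio_subset_Iio (by omega))))
      (ih _ (by omega) (by omega) _ he'.comp_add_right)
  obtain ⟨hci, hc⟩ := integrable_and_integral_sub_mul_sub_pow hZ hZX hX hX₀
    (he.ne (by simp) (by simp; omega) (by decide : 0 ≠ 1))
    (he.ne (by simp) (by simp; omega) (by decide : 0 ≠ 2))
    (he.ne (by simp; omega) (by simp; omega) (by decide : 1 ≠ 2)) hmN
  have hsum := integrable_finsetSum _ fun j hj =>
    (hblock j hj).1.const_mul ((-1) ^ j * (m.choose j : ℝ))
  simp_rw [mbar_succ_of_four_le hm]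
  refine ⟨hci.sub hsum, ?_⟩
  rw [integral_sub hci hsum, integral_finsetSum _ fun j hj => (hblock j hj).1.const_mul _, hc,
    sum_congr (s₁ := Icc 2 (m - 1)) rfl fun j hj => by rw [integral_const_mul, (hblock j hj).2]]
  exact sum_range_sub_sum_Icc_eq (M := fun p => moment X p μ) (moment_zero_right X)
    (by rwa [moment_one]) (by omega)

theorem integrable_and_integral_mbar (hZ : iIndepFun Z μ) (hZX : ∀ i, IdentDistrib (Z i) X μ μ)
    (hX : MemLp X N μ) (hX₀ : μ[X] = 0) {K : ℕ} (hK : 1 ≤ K) (hKN : K ≤ N) {e : ℕ → ι}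
    (he : Set.InjOn e (Set.Iio K)) :
    Integrable (fun ω => mbar K fun i => Z (e i) ω) μ ∧
      ∫ ω, mbar K (fun i => Z (e i) ω) ∂μ = moment X K μ := by
  induction K using Nat.strong_induction_on generalizing e with
  | _ K ih =>
    match K, hK with
    | 1, _ => simp [mbar, moment_one, hX₀]
    | 2, _ => exact integrable_and_integral_mbar_two hZ hZX hX hX₀ hKN he
    | 3, _ => exact integrable_and_integral_mbar_three hZ hZX hX hX₀ hKN he
    | 4, _ => exact integrable_and_integral_mbar_four hZ hZX hX hX₀ hKN he
    | m + 5, _ =>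
      exact integrable_and_integral_mbar_succ_of_four_le hZ hZX hX hX₀ (m := m + 4) (by omega)
        hKN (fun K hK hK₁ e he => ih K hK hK₁ (by omega) he) he

end IID

theorem recursive_D_representation_of_central_moments_general
    {Ω : Type*} {mΩ : MeasurableSpace Ω} {μ : Measure Ω} [IsProbabilityMeasure μ]
    (n : ℕ)
    (X : Ω → ℝ) (Y : Fin (n + 1) → Ω → ℝ) (μX : ℝ)
    (hX : MemLp X (n + 1) μ)
    (hμX : μX = ∫ a, X a ∂μ)
    (hindep : iIndepFun Y μ)
    (hid : ∀ i, IdentDistrib (Y i) X μ μ) :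
    ∀ k, 1 ≤ k → k ≤ n →
      ∫ ω, mbar (k + 1) (fun i => Y ((i : ℕ) : Fin (n + 1)) ω) ∂μ
        = ∫ ω, (X ω - μX) ^ (k + 1) ∂μ := by
  intro k hk hkn
  have hX' : MemLp (fun ω => X ω - μX) (n + 1 : ℕ) μ := by
    push_cast
    exact hX.sub (memLp_const μX)
  have hmean : μ[fun ω => X ω - μX] = 0 := by
    rw [integral_sub (hX.integrable (by simp)) (integrable_const μX), hμX]
    simp
  have he : Set.InjOn (fun i : ℕ => (i : Fin (n + 1))) (Set.Iio (k + 1)) :=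
    (CharP.natCast_injOn_Iio (Fin (n + 1)) (n + 1)).mono (Set.Iio_subset_Iio (by omega))
  have hcenter ω : mbar (k + 1) (fun i => Y (i : Fin (n + 1)) ω)
      = mbar (k + 1) fun i => Y (i : Fin (n + 1)) ω - μX := (mbar_sub_const _ _ μX).symm
  simp_rw [hcenter]
  exact (integrable_and_integral_mbar (hindep.comp _ fun _ => measurable_sub_const μX)
    (fun i => (hid i).comp (measurable_sub_const μX)) hX' hmean (by omega) (by omega) he).2

theorem recursive_D_representation_of_central_moments
    {Ω : Type*} {mΩ : MeasurableSpace Ω} {μ : Measure Ω} [IsProbabilityMeasure μ]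
    (n : ℕ) (hn : 1 ≤ n)
    (X : Ω → ℝ) (Y : Fin (n + 1) → Ω → ℝ) (μX : ℝ)
    (hX : MemLp X (n + 1) μ)
    (hμX : μX = ∫ a, X a ∂μ)
    (hindep : iIndepFun Y μ)
    (hid : ∀ i, IdentDistrib (Y i) X μ μ) :
    ∀ k, 1 ≤ k → k ≤ n →
      ∫ ω, mbar (k + 1) (fun i => Y ((i : ℕ) : Fin (n + 1)) ω) ∂μ
        = ∫ ω, (X ω - μX) ^ (k + 1) ∂μ :=
  recursive_D_representation_of_central_moments_general (mΩ := mΩ) n X Y μX hX hμX hindep hid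
end
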